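/- For every fixed u, v ∈ [0,1], the mapping (s,t) ↦ ψ(s,t;u,v) is continuously differentiable on the open set {(s,t) ∈ ℝ² : 0 < s < t}, where ψ is the Brownian-copula kernel. -/

import Mathlib

open MeasureTheory Set Filter

/-- Density of the standard normal distribution (φ). -/
noncomputable def stdNormalPDF (x : ℝ) : ℝ := (Real.sqrt (2 * Real.pi))⁻¹ * Real.exp (-x ^ 2 / 2)

/-- Cumulative distribution function of the standard normal distribution (Φ). -/
noncomputable def stdNormalCDF (x : ℝ) : ℝ := ∫ t in Set.Iic x, stdNormalPDF t

/-- The standard normal quantile function (Φ⁻¹), the inverse of Φ on (0,1). -/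
noncomputable def stdNormalCDFInv : ℝ → ℝ := Function.invFun stdNormalCDF

/-- The integrand of the Brownian-copula kernel; the `if` branches encode the
conventions Φ⁻¹(0) = -∞ (so Φ(·) = 0) and Φ⁻¹(1) = +∞ (so Φ(·) = 1). -/
noncomputable def psiIntegrand (s t v w : ℝ) : ℝ :=
  if v ≤ 0 then 0
  else if 1 ≤ v then 1
  else stdNormalCDF ((Real.sqrt (max s t) * stdNormalCDFInv v -
      Real.sqrt (min s t) * stdNormalCDFInv w) / Real.sqrt |t - s|)

/-- The Brownian-copula kernel ψ(s,t;u,v). -/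
noncomputable def psi (s t u v : ℝ) : ℝ :=
  if 0 < |t - s| then ∫ w in (0:ℝ)..u, psiIntegrand s t v w
  else if 0 < t then min u v
  else u * v

/-!
For `0 < s < t` and `0 < v < 1`, the substitution `w = Φ(x)` turns `ψ(s, t; u, v)` into
`K(a, b) = ∫_{Φ(x) < u} Φ(a - b x) φ(x) dx` with `a = √t Φ⁻¹(v) / √(t - s)` and
`b = √s / √(t - s)`, which are smooth in `(s, t)` there. `K` is `C¹` on all of `ℝ²` by
differentiation under the integral sign: its derivative `φ(a - b x) φ(x) (1, -x)` is dominated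
by `(1 + |x|) φ(x) / √(2π)`, which is integrable. For `v ∉ (0, 1)` the kernel does not depend
on `(s, t)` at all.
-/

open ProbabilityTheory

lemma stdNormalPDF_eq_gaussianPDFReal : stdNormalPDF = gaussianPDFReal 0 1 := by
  ext x; simp [stdNormalPDF, gaussianPDFReal]

lemma stdNormalPDF_pos (x : ℝ) : 0 < stdNormalPDF x := by
  rw [stdNormalPDF_eq_gaussianPDFReal]; exact gaussianPDFReal_pos _ _ _ one_ne_zero

lemma continuous_stdNormalPDF : Continuous stdNormalPDF := by
  unfold stdNormalPDF; fun_prop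

lemma stdNormalPDF_le (x : ℝ) : stdNormalPDF x ≤ (Real.sqrt (2 * Real.pi))⁻¹ := by
  unfold stdNormalPDF
  have : Real.exp (-x ^ 2 / 2) ≤ 1 := Real.exp_le_one_iff.2 (by nlinarith [sq_nonneg x])
  exact mul_le_of_le_one_right (by positivity) this

lemma integrable_stdNormalPDF : Integrable stdNormalPDF := by
  rw [stdNormalPDF_eq_gaussianPDFReal]; exact integrable_gaussianPDFReal 0 1

lemma integrable_mul_stdNormalPDF : Integrable fun x => x * stdNormalPDF x := by
  refine ((integrable_mul_exp_neg_mul_sq (b := 2⁻¹) (by norm_num)).const_mul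
    (Real.sqrt (2 * Real.pi))⁻¹).congr (Eventually.of_forall fun x => ?_)
  simp only [stdNormalPDF]; ring_nf

lemma stdNormalCDF_eq_cdf_gaussianReal : stdNormalCDF = cdf (gaussianReal 0 1) := by
  ext x
  rw [cdf_eq_real, measureReal_def, gaussianReal_apply_eq_integral 0 one_ne_zero,
    ENNReal.toReal_ofReal (setIntegral_nonneg measurableSet_Iic
      fun y _ => gaussianPDFReal_nonneg 0 1 y), stdNormalCDF, stdNormalPDF_eq_gaussianPDFReal]

lemma hasDerivAt_stdNormalCDF (x : ℝ) : HasDerivAt stdNormalCDF (stdNormalPDF x) x := by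
  have hF (y : ℝ) : stdNormalCDF y = stdNormalCDF 0 + ∫ t in (0:ℝ)..y, stdNormalPDF t := by
    rw [stdNormalCDF, stdNormalCDF, ← intervalIntegral.integral_Iic_sub_Iic
      integrable_stdNormalPDF.integrableOn integrable_stdNormalPDF.integrableOn]
    ring
  rw [funext hF]
  exact (intervalIntegral.integral_hasDerivAt_right integrable_stdNormalPDF.intervalIntegrable
    continuous_stdNormalPDF.stronglyMeasurable.stronglyMeasurableAtFilter
    continuous_stdNormalPDF.continuousAt).const_add _

lemma continuous_stdNormalCDF : Continuous stdNormalCDF :=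
  continuous_iff_continuousAt.2 fun x => (hasDerivAt_stdNormalCDF x).continuousAt

lemma strictMono_stdNormalCDF : StrictMono stdNormalCDF :=
  strictMono_of_hasDerivAt_pos hasDerivAt_stdNormalCDF stdNormalPDF_pos

lemma range_stdNormalCDF : range stdNormalCDF = Ioo 0 1 := by
  have hcont := continuous_stdNormalCDF
  have hmono := strictMono_stdNormalCDF
  rw [stdNormalCDF_eq_cdf_gaussianReal] at hcont hmono ⊢
  apply Subset.antisymm
  · rintro _ ⟨x, rfl⟩
    exact ⟨(cdf_nonneg _ (x - 1)).trans_lt (hmono (sub_one_lt x)),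
      (hmono (lt_add_one x)).trans_le (cdf_le_one _ _)⟩
  · intro y hy
    exact mem_range_of_exists_le_of_exists_ge hcont
      ((tendsto_cdf_atBot _).eventually (ge_mem_nhds hy.1)).exists
      ((tendsto_cdf_atTop _).eventually (le_mem_nhds hy.2)).exists

lemma stdNormalCDF_mem_Ioo (x : ℝ) : stdNormalCDF x ∈ Ioo 0 1 :=
  range_stdNormalCDF ▸ mem_range_self x

lemma norm_stdNormalCDF_le_one (x : ℝ) : ‖stdNormalCDF x‖ ≤ 1 := by
  obtain ⟨h0, h1⟩ := stdNormalCDF_mem_Ioo x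
  rw [Real.norm_of_nonneg h0.le]
  exact h1.le

lemma stdNormalCDFInv_stdNormalCDF (x : ℝ) : stdNormalCDFInv (stdNormalCDF x) = x :=
  Function.leftInverse_invFun strictMono_stdNormalCDF.injective x

noncomputable def fstSubSmulSnd (x : ℝ) : ℝ × ℝ →L[ℝ] ℝ :=
  ContinuousLinearMap.fst ℝ ℝ ℝ - x • ContinuousLinearMap.snd ℝ ℝ ℝ

lemma hasFDerivAt_fst_sub_snd_mul (x : ℝ) (q : ℝ × ℝ) :
    HasFDerivAt (fun q : ℝ × ℝ => q.1 - q.2 * x) (fstSubSmulSnd x) q :=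
  hasFDerivAt_fst.sub (hasFDerivAt_snd.mul_const x)

lemma continuous_fstSubSmulSnd : Continuous fstSubSmulSnd :=
  continuous_const.sub (continuous_id.smul continuous_const)

lemma norm_fstSubSmulSnd_le (x : ℝ) : ‖fstSubSmulSnd x‖ ≤ 1 + |x| := by
  refine ContinuousLinearMap.opNorm_le_bound _ (by positivity) fun q => ?_
  calc ‖q.1 - x * q.2‖ ≤ ‖q.1‖ + |x| * ‖q.2‖ := by
        simpa only [norm_mul, Real.norm_eq_abs] using norm_sub_le q.1 (x * q.2)
    _ ≤ ‖q‖ + |x| * ‖q‖ := by gcongr; exacts [norm_fst_le q, norm_snd_le q]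
    _ = (1 + |x|) * ‖q‖ := by ring

section ParametricIntegral

variable {μ : Measure ℝ} {g : ℝ → ℝ}

lemma norm_stdNormalPDF_mul_smul_le (q : ℝ × ℝ) (x : ℝ) :
    ‖(stdNormalPDF (q.1 - q.2 * x) * g x) • fstSubSmulSnd x‖ ≤
      (Real.sqrt (2 * Real.pi))⁻¹ * (‖g x‖ + ‖x * g x‖) := by
  rw [norm_smul, norm_mul, Real.norm_of_nonneg (stdNormalPDF_pos _).le]
  calc stdNormalPDF (q.1 - q.2 * x) * ‖g x‖ * ‖fstSubSmulSnd x‖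
      ≤ (Real.sqrt (2 * Real.pi))⁻¹ * ‖g x‖ * (1 + |x|) := by
        gcongr
        exacts [stdNormalPDF_le _, norm_fstSubSmulSnd_le x]
    _ = (Real.sqrt (2 * Real.pi))⁻¹ * (‖g x‖ + ‖x * g x‖) := by
        simp only [norm_mul, Real.norm_eq_abs]; ring

variable (hg : Integrable g μ) (hxg : Integrable (fun x => x * g x) μ)
include hg hxg

theorem hasFDerivAt_integral_stdNormalCDF_sub_mul (p : ℝ × ℝ) :
    HasFDerivAt (fun q : ℝ × ℝ => ∫ x, stdNormalCDF (q.1 - q.2 * x) * g x ∂μ)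
      (∫ x, (stdNormalPDF (p.1 - p.2 * x) * g x) • fstSubSmulSnd x ∂μ) p := by
  have hΦ (q : ℝ × ℝ) : Continuous fun x => stdNormalCDF (q.1 - q.2 * x) :=
    continuous_stdNormalCDF.comp (by fun_prop)
  have hφ : Continuous fun x => stdNormalPDF (p.1 - p.2 * x) :=
    continuous_stdNormalPDF.comp (by fun_prop)
  have hF'_meas : AEStronglyMeasurable
      (fun x => (stdNormalPDF (p.1 - p.2 * x) * g x) • fstSubSmulSnd x) μ :=
    (hφ.aestronglyMeasurable.mul hg.1).smul continuous_fstSubSmulSnd.aestronglyMeasurable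
  refine hasFDerivAt_integral_of_dominated_of_fderiv_le
    (F := fun q x => stdNormalCDF (q.1 - q.2 * x) * g x)
    (F' := fun q x => (stdNormalPDF (q.1 - q.2 * x) * g x) • fstSubSmulSnd x) (x₀ := p)
    (bound := fun x => (Real.sqrt (2 * Real.pi))⁻¹ * (‖g x‖ + ‖x * g x‖)) univ_mem
    (Eventually.of_forall fun q => (hΦ q).aestronglyMeasurable.mul hg.1)
    (hg.bdd_mul (c := 1) (hΦ p).aestronglyMeasurable
      (Eventually.of_forall fun x => norm_stdNormalCDF_le_one _))
    hF'_meas (Eventually.of_forall fun x q _ => norm_stdNormalPDF_mul_smul_le q x)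
    ((hg.norm.add hxg.norm).const_mul _)
    (Eventually.of_forall fun x q _ => ?_)
  have h := ((hasDerivAt_stdNormalCDF _).comp_hasFDerivAt q
      (hasFDerivAt_fst_sub_snd_mul x q)).mul_const (g x)
  rwa [smul_smul, mul_comm] at h

theorem contDiff_integral_stdNormalCDF_sub_mul :
    ContDiff ℝ 1 fun q : ℝ × ℝ => ∫ x, stdNormalCDF (q.1 - q.2 * x) * g x ∂μ := by
  have hderiv := hasFDerivAt_integral_stdNormalCDF_sub_mul hg hxg
  refine contDiff_one_iff_fderiv.2 ⟨fun p => (hderiv p).differentiableAt, ?_⟩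
  rw [funext fun p => (hderiv p).fderiv]
  refine continuous_of_dominated
    (fun q => ((continuous_stdNormalPDF.comp (by fun_prop)).aestronglyMeasurable.mul hg.1).smul
      continuous_fstSubSmulSnd.aestronglyMeasurable)
    (fun q => Eventually.of_forall fun x => norm_stdNormalPDF_mul_smul_le q x)
    ((hg.norm.add hxg.norm).const_mul _) (Eventually.of_forall fun x => ?_)
  exact ((continuous_stdNormalPDF.comp (by fun_prop)).mul continuous_const).smul continuous_const

end ParametricIntegral

lemma intervalIntegral_comp_stdNormalCDFInv {u : ℝ} (hu : u ∈ Icc (0:ℝ) 1) (f : ℝ → ℝ) :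
    ∫ w in (0:ℝ)..u, f (stdNormalCDFInv w) =
      ∫ x in stdNormalCDF ⁻¹' Ioo 0 u, f x * stdNormalPDF x := by
  have hS : MeasurableSet (stdNormalCDF ⁻¹' Ioo 0 u) :=
    continuous_stdNormalCDF.measurable measurableSet_Ioo
  have himage : stdNormalCDF '' (stdNormalCDF ⁻¹' Ioo 0 u) = Ioo 0 u := by
    rw [image_preimage_eq_inter_range, range_stdNormalCDF,
      inter_eq_left.2 (Ioo_subset_Ioo_right hu.2)]
  have hsubst := integral_image_eq_integral_abs_deriv_smul hS
    (fun x _ => (hasDerivAt_stdNormalCDF x).hasDerivWithinAt)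
    strictMono_stdNormalCDF.injective.injOn (fun w => f (stdNormalCDFInv w) : ℝ → ℝ)
  rw [himage] at hsubst
  rw [intervalIntegral.integral_of_le hu.1, integral_Ioc_eq_integral_Ioo, hsubst]
  refine setIntegral_congr_fun hS fun x _ => ?_
  rw [stdNormalCDFInv_stdNormalCDF, abs_of_pos (stdNormalPDF_pos x),
    smul_eq_mul, mul_comm]

lemma psi_of_lt {s t : ℝ} (hst : s < t) (u v : ℝ) :
    psi s t u v = ∫ w in (0:ℝ)..u, psiIntegrand s t v w :=
  if_pos (abs_pos.2 (sub_ne_zero.2 hst.ne'))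

lemma psi_of_nonpos {s t : ℝ} (hst : s < t) (u : ℝ) {v : ℝ} (hv : v ≤ 0) :
    psi s t u v = 0 := by
  simp [psi_of_lt hst, psiIntegrand, hv]

lemma psi_of_one_le {s t : ℝ} (hst : s < t) (u : ℝ) {v : ℝ} (hv0 : 0 < v) (hv1 : 1 ≤ v) :
    psi s t u v = u := by
  simp [psi_of_lt hst, psiIntegrand, not_le.2 hv0, hv1]

noncomputable def brownianCoeffs (c : ℝ) (p : ℝ × ℝ) : ℝ × ℝ :=
  (Real.sqrt p.2 * c / Real.sqrt (p.2 - p.1), Real.sqrt p.1 / Real.sqrt (p.2 - p.1))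

lemma psiIntegrand_of_lt {p : ℝ × ℝ} (hp : p.1 < p.2) {v : ℝ} (hv : v ∈ Ioo (0:ℝ) 1)
    (w : ℝ) :
    psiIntegrand p.1 p.2 v w = stdNormalCDF ((brownianCoeffs (stdNormalCDFInv v) p).1 -
      (brownianCoeffs (stdNormalCDFInv v) p).2 * stdNormalCDFInv w) := by
  rw [psiIntegrand, if_neg (not_le.2 hv.1), if_neg (not_le.2 hv.2), max_eq_right hp.le,
    min_eq_left hp.le, abs_of_pos (sub_pos.2 hp), brownianCoeffs, sub_div]
  ring_nf

lemma psi_eq_setIntegral_stdNormalCDF_sub_mul {p : ℝ × ℝ} (hp : p.1 < p.2) {u v : ℝ}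
    (hu : u ∈ Icc (0:ℝ) 1) (hv : v ∈ Ioo (0:ℝ) 1) :
    psi p.1 p.2 u v = ∫ x in stdNormalCDF ⁻¹' Ioo 0 u,
      stdNormalCDF ((brownianCoeffs (stdNormalCDFInv v) p).1 -
        (brownianCoeffs (stdNormalCDFInv v) p).2 * x) * stdNormalPDF x := by
  simp_rw [psi_of_lt hp, psiIntegrand_of_lt hp hv]
  set q := brownianCoeffs (stdNormalCDFInv v) p
  exact intervalIntegral_comp_stdNormalCDFInv hu fun x => stdNormalCDF (q.1 - q.2 * x)

lemma contDiffOn_brownianCoeffs (c : ℝ) :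
    ContDiffOn ℝ 1 (brownianCoeffs c) {p : ℝ × ℝ | 0 < p.1 ∧ p.1 < p.2} := by
  rintro p ⟨hs, hst⟩
  have hsqrt {f : ℝ × ℝ → ℝ} (hf : ContDiff ℝ 1 f) (hp : 0 < f p) :
      ContDiffAt ℝ 1 (fun q => Real.sqrt (f q)) p :=
    (Real.contDiffAt_sqrt hp.ne').comp p hf.contDiffAt
  have hne : Real.sqrt (p.2 - p.1) ≠ 0 := (Real.sqrt_pos.2 (sub_pos.2 hst)).ne'
  have hdiff := hsqrt (contDiff_snd.sub contDiff_fst) (sub_pos.2 hst)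
  exact ((((hsqrt contDiff_snd (hs.trans hst)).mul contDiffAt_const).div hdiff hne).prodMk
    ((hsqrt contDiff_fst hs).div hdiff hne)).contDiffWithinAt

theorem psi_contDiffOn_general (u v : ℝ) (hu : u ∈ Set.Icc (0:ℝ) 1) :
    ContDiffOn ℝ 1 (fun p : ℝ × ℝ => psi p.1 p.2 u v)
      {p : ℝ × ℝ | 0 < p.1 ∧ p.1 < p.2} := by
  rcases le_or_gt v 0 with hv0 | hv0
  · exact contDiffOn_const.congr fun p hp => psi_of_nonpos hp.2 u hv0
  rcases le_or_gt 1 v with hv1 | hv1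
  · exact contDiffOn_const.congr fun p hp => psi_of_one_le hp.2 u hv0 hv1
  have hK := contDiff_integral_stdNormalCDF_sub_mul
    (μ := volume.restrict (stdNormalCDF ⁻¹' Ioo 0 u))
    integrable_stdNormalPDF.integrableOn integrable_mul_stdNormalPDF.integrableOn
  exact (hK.comp_contDiffOn (contDiffOn_brownianCoeffs (stdNormalCDFInv v))).congr
    fun p hp => psi_eq_setIntegral_stdNormalCDF_sub_mul hp.2 hu ⟨hv0, hv1⟩

/-- For every fixed u, v ∈ [0,1], the mapping (s,t) ↦ ψ(s,t;u,v) is continuously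
differentiable on the open set {(s,t) : 0 < s < t}. -/
theorem psi_contDiffOn (u v : ℝ) (hu : u ∈ Set.Icc (0:ℝ) 1) (hv : v ∈ Set.Icc (0:ℝ) 1) :
    ContDiffOn ℝ 1 (fun p : ℝ × ℝ => psi p.1 p.2 u v)
      {p : ℝ × ℝ | 0 < p.1 ∧ p.1 < p.2} :=
  psi_contDiffOn_general u v hu
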